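/- arXiv:2311.04790 — 4 statements merged into one kernel-verified Lean document; each statement's English description precedes it below -/
import Mathlib

section
/- Under the stated hypotheses, suppose in addition that for every ω ∈ Ω the operator T_ω is 1/β(ω)-cocoercive (i.e., ⟨x − y, T_ω x − T_ω y⟩ ≥ (1/β(ω))‖T_ω x − T_ω y‖² for all x, y ∈ H) and L_ω ≠ 0. Then the operator T : X → X : 𝗑 ↦ ∫_Ω L_ω*(T_ω(L_ω 𝗑)) μ(dω) is 1/τ-cocoercive, where τ = ∫_Ω ‖L_ω‖² β(ω) μ(dω), i.e., ⟨𝗑 − 𝗒, T𝗑 − T𝗒⟩ ≥ (1/τ)‖T𝗑 − T𝗒‖² for all 𝗑, 𝗒 ∈ X. -/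
open MeasureTheory
open scoped ENNReal NNReal

/-!
With `u ω = T ω (L ω ξ) - T ω (L ω η)`, the difference `Tξ - Tη` is `∫ (L ω)† (u ω)`.
Splitting `‖L ω‖ ‖u ω‖ = (‖L ω‖ √β ω) (‖u ω‖ / √β ω)`, Cauchy–Schwarz gives
`‖Tξ - Tη‖² ≤ τ ∫ ‖u ω‖² / β ω`, and fiberwise cocoercivity bounds the last integral by
`∫ ⟪L ω (ξ - η), u ω⟫ = ⟪ξ - η, Tξ - Tη⟫`.

The measure-theoretic work is Bochner integrability of `ω ↦ (L ω)† (u ω)`: in the separable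
space `X` its measurability follows from that of its inner products (a case of Pettis' theorem),
and the square-integrability of `‖L ω‖` and of `T ω (L ω ξ)` makes it integrable.
-/

theorem ContinuousLinearMap.opNorm_eq_iSup_of_denseRange {E F : Type*}
    [NormedAddCommGroup E] [NormedSpace ℝ E] [NormedAddCommGroup F] [NormedSpace ℝ F]
    {d : ℕ → E} (hd : DenseRange d) (A : E →L[ℝ] F) :
    ‖A‖ = ⨆ n, ‖A (d n)‖ / ‖d n‖ := by
  have hle : ∀ n, ‖A (d n)‖ / ‖d n‖ ≤ ‖A‖ := fun n => A.ratio_le_opNorm (d n)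
  have hbdd : BddAbove (Set.range fun n => ‖A (d n)‖ / ‖d n‖) := ⟨‖A‖, Set.forall_mem_range.2 hle⟩
  refine le_antisymm (A.opNorm_le_bound ?_ fun x => ?_) (ciSup_le hle)
  · exact (le_ciSup hbdd 0).trans' (by positivity)
  refine hd.induction_on x (isClosed_le (by fun_prop) (by fun_prop)) fun n => ?_
  rcases eq_or_ne (d n) 0 with h | h
  · simp [h]
  · exact (div_le_iff₀ (norm_pos_iff.2 h)).1 (le_ciSup hbdd n)

theorem measurable_opNorm_of_forall_measurable_apply {Ω E F : Type*} [MeasurableSpace Ω]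
    [NormedAddCommGroup E] [NormedSpace ℝ E] [TopologicalSpace.SeparableSpace E]
    [NormedAddCommGroup F] [NormedSpace ℝ F] [MeasurableSpace F] [OpensMeasurableSpace F]
    {A : Ω → E →L[ℝ] F} (hA : ∀ x, Measurable fun ω => A ω x) :
    Measurable fun ω => ‖A ω‖ := by
  obtain ⟨d, hd⟩ := TopologicalSpace.exists_dense_seq E
  simp_rw [ContinuousLinearMap.opNorm_eq_iSup_of_denseRange hd]
  exact Measurable.iSup fun n => (hA (d n)).norm.div_const _

theorem measurable_of_forall_measurable_dist {Ω E : Type*} [MeasurableSpace Ω]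
    [MetricSpace E] [TopologicalSpace.SeparableSpace E] [MeasurableSpace E] [BorelSpace E]
    {f : Ω → E} (hf : ∀ x, Measurable fun ω => dist (f ω) x) : Measurable f := by
  refine measurable_of_isClosed fun s hs => ?_
  obtain ⟨t, hts, htc, hst⟩ :=
    (TopologicalSpace.IsSeparable.of_separableSpace s).exists_countable_dense_subset
  rcases t.eq_empty_or_nonempty with rfl | ht
  · simp [Set.subset_empty_iff.1 (by simpa using hst)]
  have hpre : f ⁻¹' s = {ω | Metric.infDist (f ω) t = 0} := by
    ext ω
    rw [Set.mem_preimage, ← hs.closure_subset_iff.2 hts |>.antisymm hst,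
      Metric.mem_closure_iff_infDist_zero ht]
    rfl
  have : Countable t := htc.to_subtype
  rw [hpre]
  simp_rw [Metric.infDist_eq_iInf]
  exact measurableSet_eq_fun (Measurable.iInf fun y => hf y) measurable_const

theorem measurable_of_forall_measurable_inner {Ω E : Type*} [MeasurableSpace Ω]
    [NormedAddCommGroup E] [InnerProductSpace ℝ E] [TopologicalSpace.SeparableSpace E]
    [MeasurableSpace E] [BorelSpace E]
    {f : Ω → E} (hf : ∀ y, Measurable fun ω => inner ℝ (f ω) y) : Measurable f := by
  obtain ⟨d, hd⟩ := TopologicalSpace.exists_dense_seq E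
  refine measurable_of_forall_measurable_dist fun x => ?_
  have hdist : ∀ ω, dist (f ω) x = ⨆ n, ‖inner ℝ (f ω - x) (d n)‖ / ‖d n‖ := fun ω => by
    rw [dist_eq_norm, ← innerSL_apply_norm ℝ,
      ContinuousLinearMap.opNorm_eq_iSup_of_denseRange hd]
    rfl
  simp_rw [hdist, inner_sub_left]
  exact Measurable.iSup fun n => (((hf (d n)).sub_const _).norm).div_const _

theorem stronglyMeasurable_of_forall_measurable_inner {Ω E : Type*} [MeasurableSpace Ω]
    [NormedAddCommGroup E] [InnerProductSpace ℝ E] [SecondCountableTopology E]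
    {f : Ω → E} (hf : ∀ y, Measurable fun ω => inner ℝ (f ω) y) : StronglyMeasurable f := by
  borelize E
  exact (measurable_of_forall_measurable_inner hf).stronglyMeasurable

theorem memLp_two_iff_lintegral_nnnorm_sq_lt_top {α E : Type*} [MeasurableSpace α]
    {μ : Measure α} [NormedAddCommGroup E] {f : α → E} (hf : AEStronglyMeasurable f μ) :
    MemLp f 2 μ ↔ (∫⁻ a, (‖f a‖₊ : ℝ≥0∞) ^ 2 ∂μ) < ⊤ := by
  rw [MemLp, eLpNorm_lt_top_iff_lintegral_rpow_enorm_lt_top two_ne_zero ENNReal.ofNat_ne_top]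
  simp [hf, enorm_eq_nnnorm]

theorem integral_mul_le_sqrt_mul_sqrt {α : Type*} [MeasurableSpace α] {μ : Measure α}
    {f g : α → ℝ} (hf0 : 0 ≤ᵐ[μ] f) (hg0 : 0 ≤ᵐ[μ] g) (hf : MemLp f 2 μ) (hg : MemLp g 2 μ) :
    ∫ a, f a * g a ∂μ ≤ √(∫ a, f a ^ 2 ∂μ) * √(∫ a, g a ^ 2 ∂μ) := by
  have := integral_mul_le_Lp_mul_Lq_of_nonneg Real.HolderConjugate.two_two hf0 hg0
    (by simpa using hf) (by simpa using hg)
  simpa only [Real.rpow_two, ← Real.sqrt_eq_rpow] using this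

section

variable {Ω H : Type*} [MeasurableSpace Ω] {μ : Measure Ω} [NormedAddCommGroup H]

theorem memLp_apply_of_lipschitz {p : ℝ≥0∞} {β : Ω → ℝ} {M : ℝ} (hβM : ∀ᵐ ω ∂μ, β ω ≤ M)
    {T : Ω → H → H} (hT : ∀ ω x y, ‖T ω x - T ω y‖ ≤ β ω * ‖x - y‖) {x z : Ω → H}
    (hTx : AEStronglyMeasurable (fun ω => T ω (x ω)) μ) (hx : MemLp x p μ) (hz : MemLp z p μ)
    (hTz : MemLp (fun ω => T ω (z ω)) p μ) :
    MemLp (fun ω => T ω (x ω)) p μ := by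
  refine (hTz.norm.add ((hx.sub hz).norm.const_mul M)).of_le hTx ?_
  filter_upwards [hβM] with ω hω
  refine le_trans ?_ (le_abs_self _)
  calc ‖T ω (x ω)‖ ≤ ‖T ω (z ω)‖ + ‖T ω (x ω) - T ω (z ω)‖ := norm_le_norm_add_norm_sub' _ _
    _ ≤ ‖T ω (z ω)‖ + M * ‖x ω - z ω‖ := by
      gcongr
      exact (hT ω _ _).trans (mul_le_mul_of_nonneg_right hω (norm_nonneg _))

variable {X : Type*} [NormedAddCommGroup X] [InnerProductSpace ℝ X]

theorem memLp_apply_of_memLp_opNorm {p : ℝ≥0∞} [NormedSpace ℝ H] [MeasurableSpace H]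
    [SecondCountableTopology H] [OpensMeasurableSpace H] {A : Ω → X →L[ℝ] H}
    (hA : ∀ x, Measurable fun ω => A ω x) (hAp : MemLp (fun ω => ‖A ω‖) p μ) (x : X) :
    MemLp (fun ω => A ω x) p μ :=
  (hAp.mul_const ‖x‖).of_le (hA x).aestronglyMeasurable
    (.of_forall fun ω => ((A ω).le_opNorm x).trans (le_abs_self _))

variable [CompleteSpace X] [InnerProductSpace ℝ H] [CompleteSpace H]

theorem ContinuousLinearMap.norm_adjoint_apply_le (A : X →L[ℝ] H) (v : H) :
    ‖A.adjoint v‖ ≤ ‖A‖ * ‖v‖ := by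
  simpa only [LinearIsometryEquiv.norm_map] using A.adjoint.le_opNorm v

theorem stronglyMeasurable_adjoint_apply [SecondCountableTopology X]
    [SecondCountableTopology H] [MeasurableSpace H] [BorelSpace H]
    {A : Ω → X →L[ℝ] H} (hA : ∀ x, Measurable fun ω => A ω x) {v : Ω → H} (hv : Measurable v) :
    StronglyMeasurable fun ω => (A ω).adjoint (v ω) :=
  stronglyMeasurable_of_forall_measurable_inner fun x => by
    simpa only [ContinuousLinearMap.adjoint_inner_left] using hv.inner (hA x)

theorem integrable_adjoint_apply [SecondCountableTopology X]
    [SecondCountableTopology H] [MeasurableSpace H] [BorelSpace H]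
    {A : Ω → X →L[ℝ] H} (hA : ∀ x, Measurable fun ω => A ω x)
    (hA2 : MemLp (fun ω => ‖A ω‖) 2 μ) {v : Ω → H} (hv : Measurable v) (hv2 : MemLp v 2 μ) :
    Integrable (fun ω => (A ω).adjoint (v ω)) μ :=
  (hA2.integrable_mul hv2.norm).mono' (stronglyMeasurable_adjoint_apply hA hv).aestronglyMeasurable
    (.of_forall fun ω => (A ω).norm_adjoint_apply_le (v ω))

theorem sq_norm_integral_adjoint_apply_le [MeasurableSpace H]
    [SecondCountableTopology H] [OpensMeasurableSpace H]
    {β : Ω → ℝ} (hβ : Measurable β) (hβpos : ∀ ω, 0 < β ω)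
    {A : Ω → X →L[ℝ] H} (hAm : Measurable fun ω => ‖A ω‖)
    (hAβ : Integrable (fun ω => ‖A ω‖ ^ 2 * β ω) μ)
    {u : Ω → H} (hu : Measurable u) (huβ : Integrable (fun ω => ‖u ω‖ ^ 2 / β ω) μ)
    (hint : Integrable (fun ω => (A ω).adjoint (u ω)) μ) :
    ‖∫ ω, (A ω).adjoint (u ω) ∂μ‖ ^ 2 ≤
      (∫ ω, ‖A ω‖ ^ 2 * β ω ∂μ) * ∫ ω, ‖u ω‖ ^ 2 / β ω ∂μ := by
  have hsqrt : ∀ ω, √(β ω) ^ 2 = β ω := fun ω => Real.sq_sqrt (hβpos ω).le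
  have hf : MemLp (fun ω => ‖A ω‖ * √(β ω)) 2 μ := by
    rw [memLp_two_iff_integrable_sq (by fun_prop)]
    simpa only [mul_pow, hsqrt] using hAβ
  have hg : MemLp (fun ω => ‖u ω‖ / √(β ω)) 2 μ :=
    (memLp_two_iff_integrable_sq (hu.norm.div hβ.sqrt).aestronglyMeasurable).2 <| by
      simpa only [Pi.div_apply, div_pow, hsqrt] using huβ
  have hnorm : ‖∫ ω, (A ω).adjoint (u ω) ∂μ‖ ≤
      √(∫ ω, ‖A ω‖ ^ 2 * β ω ∂μ) * √(∫ ω, ‖u ω‖ ^ 2 / β ω ∂μ) := calc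
    _ ≤ ∫ ω, ‖(A ω).adjoint (u ω)‖ ∂μ := norm_integral_le_integral_norm _
    _ ≤ ∫ ω, ‖A ω‖ * √(β ω) * (‖u ω‖ / √(β ω)) ∂μ := by
      refine integral_mono hint.norm (hf.integrable_mul hg) fun ω => ?_
      rw [mul_assoc, mul_div_cancel₀ _ (Real.sqrt_pos.2 (hβpos ω)).ne']
      exact (A ω).norm_adjoint_apply_le (u ω)
    _ ≤ _ := by
      simpa only [mul_pow, div_pow, hsqrt] using integral_mul_le_sqrt_mul_sqrt
        (.of_forall fun ω => by positivity) (.of_forall fun ω => by positivity) hf hg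
  calc _ ≤ _ := pow_le_pow_left₀ (norm_nonneg _) hnorm 2
    _ = _ := by
      rw [mul_pow, Real.sq_sqrt (integral_nonneg fun ω => by have := hβpos ω; positivity),
        Real.sq_sqrt (integral_nonneg fun ω => by have := hβpos ω; positivity)]

theorem one_div_mul_sq_norm_integral_adjoint_apply_le_inner [MeasurableSpace H]
    [SecondCountableTopology H] [OpensMeasurableSpace H]
    {β : Ω → ℝ} (hβ : Measurable β) (hβpos : ∀ ω, 0 < β ω)
    {A : Ω → X →L[ℝ] H} (hAm : Measurable fun ω => ‖A ω‖)
    (hAβ : Integrable (fun ω => ‖A ω‖ ^ 2 * β ω) μ)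
    {u : Ω → H} (hu : Measurable u) (hint : Integrable (fun ω => (A ω).adjoint (u ω)) μ) (x : X)
    (hcoco : ∀ ω, 1 / β ω * ‖u ω‖ ^ 2 ≤ inner ℝ (A ω x) (u ω)) :
    1 / (∫ ω, ‖A ω‖ ^ 2 * β ω ∂μ) * ‖∫ ω, (A ω).adjoint (u ω) ∂μ‖ ^ 2 ≤
      inner ℝ x (∫ ω, (A ω).adjoint (u ω) ∂μ) := by
  have hnonneg : ∀ ω, 0 ≤ ‖u ω‖ ^ 2 / β ω := fun ω => by have := hβpos ω; positivity
  have hdom : ∀ ω, ‖u ω‖ ^ 2 / β ω ≤ inner ℝ x ((A ω).adjoint (u ω)) := fun ω => by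
    simpa only [ContinuousLinearMap.adjoint_inner_right, one_div_mul_eq_div] using hcoco ω
  have huβ : Integrable (fun ω => ‖u ω‖ ^ 2 / β ω) μ :=
    (hint.const_inner x).mono' ((hu.norm.pow_const 2).div hβ).aestronglyMeasurable
      (.of_forall fun ω => (Real.norm_of_nonneg (hnonneg ω)).trans_le (hdom ω))
  have hI : ∫ ω, ‖u ω‖ ^ 2 / β ω ∂μ ≤ inner ℝ x (∫ ω, (A ω).adjoint (u ω) ∂μ) := by
    rw [← integral_inner hint]
    exact integral_mono huβ (hint.const_inner x) hdom
  have hτ : 0 ≤ ∫ ω, ‖A ω‖ ^ 2 * β ω ∂μ :=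
    integral_nonneg fun ω => mul_nonneg (sq_nonneg _) (hβpos ω).le
  rw [one_div_mul_eq_div]
  refine (div_le_of_le_mul₀ hτ (integral_nonneg hnonneg) ?_).trans hI
  rw [mul_comm]
  exact sq_norm_integral_adjoint_apply_le hβ hβpos hAm hAβ hu huβ hint

end

theorem stmt_2_general {Ω : Type*} [MeasurableSpace Ω] {μ : Measure Ω}
    {X : Type*} [NormedAddCommGroup X] [InnerProductSpace ℝ X] [CompleteSpace X]
    [SecondCountableTopology X]
    {H : Type*} [NormedAddCommGroup H] [InnerProductSpace ℝ H] [CompleteSpace H]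
    [SecondCountableTopology H] [MeasurableSpace H] [BorelSpace H]
    (β : Ω → ℝ) (hβmeas : Measurable β) (hβpos : ∀ ω, 0 < β ω)
    (hβbdd : ∃ M : ℝ, ∀ᵐ ω ∂μ, β ω ≤ M)
    (T : Ω → H → H) (hTlip : ∀ ω x y, ‖T ω x - T ω y‖ ≤ β ω * ‖x - y‖)
    (L : Ω → X →L[ℝ] H)
    (hA : ∀ x : Ω → H, Measurable x → (∫⁻ ω, (‖x ω‖₊ : ℝ≥0∞) ^ 2 ∂μ) < ⊤ →
      Measurable fun ω => T ω (x ω))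
    (hB : ∃ z : Ω → H, Measurable z ∧ (∫⁻ ω, (‖z ω‖₊ : ℝ≥0∞) ^ 2 ∂μ) < ⊤ ∧
      (∫⁻ ω, (‖T ω (z ω)‖₊ : ℝ≥0∞) ^ 2 ∂μ) < ⊤)
    (hC : ∀ ξ : X, Measurable fun ω => L ω ξ)
    (hD : (∫⁻ ω, (‖L ω‖₊ : ℝ≥0∞) ^ 2 ∂μ) < ⊤)
    (hcoco : ∀ ω (x y : H),
      (1 / β ω) * ‖T ω x - T ω y‖ ^ 2 ≤ inner ℝ (x - y) (T ω x - T ω y)) :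
    ∀ ξ η : X,
      (1 / (∫ ω, ‖L ω‖ ^ 2 * β ω ∂μ)) *
          ‖(∫ ω, (L ω).adjoint (T ω (L ω ξ)) ∂μ) - ∫ ω, (L ω).adjoint (T ω (L ω η)) ∂μ‖ ^ 2 ≤
        inner ℝ (ξ - η)
          ((∫ ω, (L ω).adjoint (T ω (L ω ξ)) ∂μ) - ∫ ω, (L ω).adjoint (T ω (L ω η)) ∂μ) := by
  intro ξ η
  obtain ⟨M, hβM⟩ := hβbdd
  obtain ⟨z, hz, hz2, hTz2⟩ := hB
  have hLm := measurable_opNorm_of_forall_measurable_apply hC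
  have hL2 : MemLp (fun ω => ‖L ω‖) 2 μ :=
    (memLp_two_iff_lintegral_nnnorm_sq_lt_top hLm.aestronglyMeasurable).2 (by simpa using hD)
  have hTLm : ∀ x, Measurable fun ω => T ω (L ω x) := fun x =>
    hA _ (hC x) ((memLp_two_iff_lintegral_nnnorm_sq_lt_top (hC x).aestronglyMeasurable).1
      (memLp_apply_of_memLp_opNorm hC hL2 x))
  have hTL2 : ∀ x, MemLp (fun ω => T ω (L ω x)) 2 μ := fun x =>
    memLp_apply_of_lipschitz hβM hTlip (hTLm x).aestronglyMeasurable
      (memLp_apply_of_memLp_opNorm hC hL2 x)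
      ((memLp_two_iff_lintegral_nnnorm_sq_lt_top hz.aestronglyMeasurable).2 hz2)
      ((memLp_two_iff_lintegral_nnnorm_sq_lt_top (hA z hz hz2).aestronglyMeasurable).2 hTz2)
  have hint : ∀ x, Integrable (fun ω => (L ω).adjoint (T ω (L ω x))) μ := fun x =>
    integrable_adjoint_apply hC hL2 (hTLm x) (hTL2 x)
  have hLβ : Integrable (fun ω => ‖L ω‖ ^ 2 * β ω) μ := by
    refine (hL2.integrable_sq.mul_const M).mono' (by fun_prop) ?_
    filter_upwards [hβM] with ω hω
    rw [Real.norm_of_nonneg (mul_nonneg (sq_nonneg _) (hβpos ω).le)]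
    exact mul_le_mul_of_nonneg_left hω (sq_nonneg _)
  rw [← integral_sub (hint ξ) (hint η)]
  simp_rw [← map_sub]
  refine one_div_mul_sq_norm_integral_adjoint_apply_le_inner hβmeas hβpos hLm hLβ
    ((hTLm ξ).sub (hTLm η))
    (integrable_adjoint_apply hC hL2 ((hTLm ξ).sub (hTLm η)) ((hTL2 ξ).sub (hTL2 η))) _ fun ω => ?_
  simpa only [map_sub, Pi.sub_apply] using hcoco ω (L ω ξ) (L ω η)

/-- Proposition 3.3(iii)(a): under the hypotheses of Statement 1, if in
addition every `T_ω` is `1/β(ω)`-cocoercive and `L_ω ≠ 0`, then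
`T : ξ ↦ ∫ L_ω*(T_ω(L_ω ξ)) dμ(ω)` is `1/τ`-cocoercive with
`τ = ∫ ‖L_ω‖² β(ω) dμ(ω)`. -/
theorem stmt_2 {Ω : Type*} [MeasurableSpace Ω] {μ : Measure Ω} [SigmaFinite μ] [μ.IsComplete]
    {X : Type*} [NormedAddCommGroup X] [InnerProductSpace ℝ X] [CompleteSpace X]
    [SecondCountableTopology X] [MeasurableSpace X] [BorelSpace X]
    {H : Type*} [NormedAddCommGroup H] [InnerProductSpace ℝ H] [CompleteSpace H]
    [SecondCountableTopology H] [MeasurableSpace H] [BorelSpace H]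
    (β : Ω → ℝ) (hβmeas : Measurable β) (hβpos : ∀ ω, 0 < β ω)
    (hβbdd : ∃ M : ℝ, ∀ᵐ ω ∂μ, β ω ≤ M)
    (T : Ω → H → H) (hTlip : ∀ ω x y, ‖T ω x - T ω y‖ ≤ β ω * ‖x - y‖)
    (L : Ω → X →L[ℝ] H)
    (hA : ∀ x : Ω → H, Measurable x → (∫⁻ ω, (‖x ω‖₊ : ℝ≥0∞) ^ 2 ∂μ) < ⊤ →
      Measurable fun ω => T ω (x ω))
    (hB : ∃ z : Ω → H, Measurable z ∧ (∫⁻ ω, (‖z ω‖₊ : ℝ≥0∞) ^ 2 ∂μ) < ⊤ ∧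
      (∫⁻ ω, (‖T ω (z ω)‖₊ : ℝ≥0∞) ^ 2 ∂μ) < ⊤)
    (hC : ∀ ξ : X, Measurable fun ω => L ω ξ)
    (hD : (∫⁻ ω, (‖L ω‖₊ : ℝ≥0∞) ^ 2 ∂μ) < ⊤)
    (hcoco : ∀ ω (x y : H),
      (1 / β ω) * ‖T ω x - T ω y‖ ^ 2 ≤ inner ℝ (x - y) (T ω x - T ω y))
    (hLne : ∀ ω, L ω ≠ 0) :
    ∀ ξ η : X,
      (1 / (∫ ω, ‖L ω‖ ^ 2 * β ω ∂μ)) *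
          ‖(∫ ω, (L ω).adjoint (T ω (L ω ξ)) ∂μ) - ∫ ω, (L ω).adjoint (T ω (L ω η)) ∂μ‖ ^ 2 ≤
        inner ℝ (ξ - η)
          ((∫ ω, (L ω).adjoint (T ω (L ω ξ)) ∂μ) - ∫ ω, (L ω).adjoint (T ω (L ω η)) ∂μ) :=
  stmt_2_general β hβmeas hβpos hβbdd T hTlip L hA hB hC hD hcoco
end

section
/- Under the stated hypotheses, with W = rmi(L_ω, A_ω)_{ω∈Ω} and C = rcm(L_ω, A_ω)_{ω∈Ω}, the index-1 Yosida approximations satisfy: W □ Id_X = Id_X − ∫_Ω (L_ω* ∘ (A_ω⁻¹ □ Id_H) ∘ L_ω) μ(dω) and C □ Id_X = ∫_Ω (L_ω* ∘ (A_ω □ Id_H) ∘ L_ω) μ(dω), where for a maximally monotone operator A the index-1 Yosida approximation is A □ Id = Id − J_A. Consequently, zer C = zer ∫_Ω (L_ω* ∘ (A_ω □ Id_H) ∘ L_ω) μ(dω). -/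
open MeasureTheory
open scoped ENNReal NNReal

/-- A set-valued operator `A : H → Set H` (identified with its graph) is monotone if
`⟪x − y, u − v⟫ ≥ 0` whenever `u ∈ A x` and `v ∈ A y`. -/
def IsMonotoneOp {H : Type*} [NormedAddCommGroup H] [InnerProductSpace ℝ H]
    (A : H → Set H) : Prop :=
  ∀ ⦃x u y v : H⦄, u ∈ A x → v ∈ A y → (0 : ℝ) ≤ inner ℝ (x - y) (u - v)

/-- `A` is maximally monotone: it is monotone and its graph is not properly contained in the
graph of any monotone operator. -/
def IsMaxMonotone {H : Type*} [NormedAddCommGroup H] [InnerProductSpace ℝ H]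
    (A : H → Set H) : Prop :=
  IsMonotoneOp A ∧ ∀ B : H → Set H, IsMonotoneOp B → (∀ x, A x ⊆ B x) → ∀ x, B x ⊆ A x

/-- The inverse operator `A⁻¹`, whose graph is `{(u, x) : (x, u) ∈ gra A}`. -/
def graphInv {H : Type*} (A : H → Set H) : H → Set H := fun u => {x | u ∈ A x}

/-- `J` is the resolvent `(Id + A)⁻¹` of `A` (as a single-valued, everywhere-defined map):
`J x = y ↔ x − y ∈ A y`. -/
def IsResolventOf {H : Type*} [AddCommGroup H] (A : H → Set H) (J : H → H) : Prop :=
  ∀ x y, J x = y ↔ x - y ∈ A y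

/-- For a single-valued map `R : X → X`, `rmiOp R = R⁻¹ − Id` as a set-valued operator:
`u ∈ (R⁻¹ − Id)(x) ↔ R (x + u) = x`. -/
def rmiOp {X : Type*} [AddCommGroup X] (R : X → X) : X → Set X :=
  fun x => {u | R (x + u) = x}

/-! By Moreau's decomposition `J_{A⁻¹} = Id − J_A`, and since the resolvent of
`(R⁻¹ − Id)⁻¹` is `Id − R` for every single-valued `R`, all three claims reduce to rewriting
the integrands. -/

section Resolvent

variable {H : Type*} [AddCommGroup H]

theorem IsResolventOf.unique {A : H → Set H} {J J' : H → H}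
    (hJ : IsResolventOf A J) (hJ' : IsResolventOf A J') : J = J' :=
  funext fun x => (hJ x (J' x)).mpr ((hJ' x (J' x)).mp rfl)

theorem IsResolventOf.graphInv_sub {A : H → Set H} {J : H → H} (hJ : IsResolventOf A J) :
    IsResolventOf (graphInv A) fun x => x - J x := by
  intro x y
  simp only [graphInv, Set.mem_ofPred_eq]
  constructor
  · rintro rfl
    simpa only [sub_sub_cancel] using (hJ x (J x)).mp rfl
  · intro hy
    have hJx : J x = x - y := (hJ x (x - y)).mpr (by rwa [sub_sub_cancel])
    rw [hJx, sub_sub_cancel]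

theorem isResolventOf_graphInv_rmiOp (R : H → H) :
    IsResolventOf (graphInv (rmiOp R)) fun x => x - R x := by
  intro x y
  simp only [graphInv, rmiOp, Set.mem_ofPred_eq, sub_add_cancel]
  constructor
  · rintro rfl
    abel
  · intro h
    rw [h, sub_sub_cancel]

theorem zero_mem_graphInv_rmiOp_iff (R : H → H) (x : H) :
    (0 : H) ∈ graphInv (rmiOp R) x ↔ R x = 0 := by
  simp only [graphInv, rmiOp, Set.mem_ofPred_eq, zero_add]

end Resolvent

theorem stmt_7_general
    {Ω : Type*} [MeasurableSpace Ω] {μ : Measure Ω}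
    {X : Type*} [NormedAddCommGroup X] [InnerProductSpace ℝ X] [CompleteSpace X]
    {H : Type*} [NormedAddCommGroup H] [InnerProductSpace ℝ H] [CompleteSpace H]
    -- the family of maximally monotone operators, with its resolvents `JA ω = J_{A_ω}`
    -- and the resolvents `JAinv ω = J_{A_ω⁻¹}` of the inverses
    (A : Ω → H → Set H) (JA JAinv : Ω → H → H)
    (hJA : ∀ ω, IsResolventOf (A ω) (JA ω))
    (hJAinv : ∀ ω, IsResolventOf (graphInv (A ω)) (JAinv ω))
    -- the family of bounded linear operators
    (L : Ω → X →L[ℝ] H)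
    (Jc : X → X)
    (hJc : IsResolventOf
      (graphInv (rmiOp fun ξ : X => ∫ ω, (L ω).adjoint (JAinv ω (L ω ξ)) ∂μ)) Jc) :
    (∀ ξ : X, ξ - (∫ ω, (L ω).adjoint (JA ω (L ω ξ)) ∂μ)
        = ξ - ∫ ω, (L ω).adjoint (L ω ξ - JAinv ω (L ω ξ)) ∂μ) ∧
    (∀ ξ : X, ξ - Jc ξ = ∫ ω, (L ω).adjoint (L ω ξ - JA ω (L ω ξ)) ∂μ) ∧
    {ξ : X | (0 : X) ∈
        graphInv (rmiOp fun ζ : X => ∫ ω, (L ω).adjoint (JAinv ω (L ω ζ)) ∂μ) ξ}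
      = {ξ : X | (∫ ω, (L ω).adjoint (L ω ξ - JA ω (L ω ξ)) ∂μ) = 0} := by
  obtain rfl : JAinv = fun ω x => x - JA ω x :=
    funext fun ω => (hJAinv ω).unique (hJA ω).graphInv_sub
  obtain rfl := hJc.unique (isResolventOf_graphInv_rmiOp _)
  refine ⟨fun ξ => by simp only [sub_sub_cancel], fun ξ => sub_sub_cancel _ _, ?_⟩
  ext ξ
  simp only [Set.mem_ofPred_eq, zero_mem_graphInv_rmiOp_iff]

/-- Theorem 3.5(vii)-(ix): with `W = rmi(L_ω, A_ω)` and
`C = rcm(L_ω, A_ω)` (whose resolvent is the map `Jc`), the index-1 Yosida approximations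
satisfy `W □ Id = Id − ∫ L_ω* ∘ (A_ω⁻¹ □ Id) ∘ L_ω dμ` and
`C □ Id = ∫ L_ω* ∘ (A_ω □ Id) ∘ L_ω dμ`, where `A □ Id = Id − J_A`. Consequently
`zer C = zer ∫ L_ω* ∘ (A_ω □ Id) ∘ L_ω dμ`. -/
theorem stmt_7
    {Ω : Type*} [MeasurableSpace Ω] {μ : Measure Ω} [SigmaFinite μ] [μ.IsComplete]
    {X : Type*} [NormedAddCommGroup X] [InnerProductSpace ℝ X] [CompleteSpace X]
    [SecondCountableTopology X] [MeasurableSpace X] [BorelSpace X]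
    {H : Type*} [NormedAddCommGroup H] [InnerProductSpace ℝ H] [CompleteSpace H]
    [SecondCountableTopology H] [MeasurableSpace H] [BorelSpace H]
    -- the family of maximally monotone operators, with its resolvents `JA ω = J_{A_ω}`
    -- and the resolvents `JAinv ω = J_{A_ω⁻¹}` of the inverses
    (A : Ω → H → Set H) (JA JAinv : Ω → H → H)
    (hAmax : ∀ ω, IsMaxMonotone (A ω))
    (hJA : ∀ ω, IsResolventOf (A ω) (JA ω))
    (hJAinv : ∀ ω, IsResolventOf (graphInv (A ω)) (JAinv ω))
    (hJAmeas : ∀ x : Ω → H, Measurable x → Measurable fun ω => JA ω (x ω))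
    (hdom : ∃ x xs : Ω → H, Measurable x ∧ Measurable xs ∧
      (∫⁻ ω, (‖x ω‖₊ : ℝ≥0∞) ^ 2 ∂μ) < ⊤ ∧ (∫⁻ ω, (‖xs ω‖₊ : ℝ≥0∞) ^ 2 ∂μ) < ⊤ ∧
      ∀ᵐ ω ∂μ, xs ω ∈ A ω (x ω))
    -- the family of bounded linear operators
    (L : Ω → X →L[ℝ] H)
    (hLmeas : ∀ ξ : X, Measurable fun ω => L ω ξ)
    (hLint : Integrable (fun ω => ‖L ω‖ ^ 2) μ)
    (hL0 : 0 < ∫ ω, ‖L ω‖ ^ 2 ∂μ) (hL1 : (∫ ω, ‖L ω‖ ^ 2 ∂μ) ≤ 1)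
    (Jc : X → X)
    (hJc : IsResolventOf
      (graphInv (rmiOp fun ξ : X => ∫ ω, (L ω).adjoint (JAinv ω (L ω ξ)) ∂μ)) Jc) :
    (∀ ξ : X, ξ - (∫ ω, (L ω).adjoint (JA ω (L ω ξ)) ∂μ)
        = ξ - ∫ ω, (L ω).adjoint (L ω ξ - JAinv ω (L ω ξ)) ∂μ) ∧
    (∀ ξ : X, ξ - Jc ξ = ∫ ω, (L ω).adjoint (L ω ξ - JA ω (L ω ξ)) ∂μ) ∧
    {ξ : X | (0 : X) ∈
        graphInv (rmiOp fun ζ : X => ∫ ω, (L ω).adjoint (JAinv ω (L ω ζ)) ∂μ) ξ}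
      = {ξ : X | (∫ ω, (L ω).adjoint (L ω ξ - JA ω (L ω ξ)) ∂μ) = 0} :=
  stmt_7_general A JA JAinv hJA hJAinv L Jc hJc
end

section
/- Under the stated hypotheses, let τ > 0, suppose that every A_ω is single-valued with dom A_ω = H and τ-cocoercive (⟨x − y, A_ω x − A_ω y⟩ ≥ τ‖A_ω x − A_ω y‖² for all x, y ∈ H), and set δ = (τ + 1)/∫_Ω ‖L_ω‖² μ(dω) − 1. Then the integral resolvent comixture C = rcm(L_ω, A_ω)_{ω∈Ω} is δ-cocoercive. -/
/-!
The resolvent `T_ω = J_{A_ω⁻¹}` satisfies `T_ω = a_ω ∘ (Id − T_ω)`, so the `τ`-cocoercivity of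
`a_ω` makes `T_ω` `(τ + 1)`-cocoercive. For `R = ∫ L_ω* ∘ T_ω ∘ L_ω` and
`D_ω = T_ω (L_ω p) − T_ω (L_ω q)` this gives `⟪p − q, R p − R q⟫ = ∫ ⟪L_ω (p − q), D_ω⟫ ≥
(τ + 1) ∫ ‖D_ω‖²`, while Cauchy–Schwarz gives `‖R p − R q‖² ≤ (∫ ‖L_ω‖²) (∫ ‖D_ω‖²)`; hence `R`
is `γ`-cocoercive with `γ = (τ + 1) / ∫ ‖L_ω‖²`. Finally `u ∈ C ξ` means `R (ξ + u) = u`, and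
substituting this into the cocoercivity inequality of `R` leaves exactly the
`(γ − 1)`-cocoercivity of `C`.
-/

open MeasureTheory
open scoped ENNReal NNReal

def IsCocoercive {H : Type*} [NormedAddCommGroup H] [InnerProductSpace ℝ H]
    (β : ℝ) (T : H → H) : Prop :=
  ∀ x y, β * ‖T x - T y‖ ^ 2 ≤ inner ℝ (x - y) (T x - T y)

namespace IsResolventOf

variable {H : Type*} [AddCommGroup H] {A : H → Set H} {J : H → H}

theorem sub_mem (hJ : IsResolventOf A J) (x : H) : x - J x ∈ A (J x) :=
  (hJ x _).1 rfl

theorem graphInv_apply {J' : H → H} (hJ : IsResolventOf A J)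
    (hJ' : IsResolventOf (graphInv A) J') (x : H) : J' x = x - J x :=
  (hJ' x _).2 <| show x - J x ∈ A (x - (x - J x)) by rw [sub_sub_cancel]; exact hJ.sub_mem x

theorem graphInv_apply_add (hJ : IsResolventOf (graphInv A) J) {x u : H} (hu : u ∈ A x) :
    J (x + u) = u :=
  (hJ _ _).2 <| show u ∈ A (x + u - u) by rwa [add_sub_cancel_right]

end IsResolventOf

namespace IsCocoercive

variable {H : Type*} [NormedAddCommGroup H] [InnerProductSpace ℝ H] {β : ℝ} {T : H → H}

theorem mul_norm_sub_le (hT : IsCocoercive β T) (x y : H) :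
    β * ‖T x - T y‖ ≤ ‖x - y‖ := by
  rcases (norm_nonneg (T x - T y)).eq_or_lt with h | h
  · rw [← h, mul_zero]; exact norm_nonneg _
  · refine le_of_mul_le_mul_right ?_ h
    calc β * ‖T x - T y‖ * ‖T x - T y‖ = β * ‖T x - T y‖ ^ 2 := by ring
      _ ≤ inner ℝ (x - y) (T x - T y) := hT x y
      _ ≤ ‖x - y‖ * ‖T x - T y‖ := real_inner_le_norm _ _

theorem lipschitzWith_one (hT : IsCocoercive β T) (hβ : 1 ≤ β) : LipschitzWith 1 T :=
  LipschitzWith.of_dist_le_mul fun x y => by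
    rw [NNReal.coe_one, one_mul, dist_eq_norm, dist_eq_norm]
    exact le_trans (le_mul_of_one_le_left (norm_nonneg _) hβ) (hT.mul_norm_sub_le x y)

theorem graphInv_rmiOp (hT : IsCocoercive β T) {ξ η u v : H}
    (hu : u ∈ graphInv (rmiOp T) ξ) (hv : v ∈ graphInv (rmiOp T) η) :
    (β - 1) * ‖u - v‖ ^ 2 ≤ inner ℝ (ξ - η) (u - v) := by
  have hu' : T (u + ξ) = u := hu
  have hv' : T (v + η) = v := hv
  have key := hT (u + ξ) (v + η)
  rw [hu', hv', show u + ξ - (v + η) = (ξ - η) + (u - v) by abel, inner_add_left,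
    real_inner_self_eq_norm_sq] at key
  linarith

theorem resolvent_graphInv {A : H → Set H} {a : H → H} (ha : IsCocoercive β a)
    (hA : ∀ x, A x = {a x}) (hJ : IsResolventOf (graphInv A) T) : IsCocoercive (β + 1) T := by
  have hTa : ∀ x, T x = a (x - T x) := fun x => by
    simpa only [graphInv, hA, Set.mem_ofPred_eq, Set.mem_singleton_iff] using hJ.sub_mem x
  intro x y
  have key := ha (x - T x) (y - T y)
  rw [← hTa, ← hTa, show x - T x - (y - T y) = (x - y) - (T x - T y) by abel, inner_sub_left,
    real_inner_self_eq_norm_sq] at key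
  linarith

end IsCocoercive

section Measurability

variable {Ω : Type*} [MeasurableSpace Ω]
  {X : Type*} [NormedAddCommGroup X] [InnerProductSpace ℝ X] [CompleteSpace X]
  [SecondCountableTopology X] [MeasurableSpace X] [BorelSpace X]

/-- Pettis-type criterion: pairing with a dense sequence is a continuous injection of the Polish
space `X` into `ℕ → ℝ`, hence a measurable embedding. -/
theorem measurable_of_forall_measurable_inner_s9 {f : Ω → X}
    (hf : ∀ c : X, Measurable fun ω => inner ℝ (f ω) c) : Measurable f := by
  obtain ⟨d, hd⟩ := TopologicalSpace.exists_dense_seq X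
  have hemb : MeasurableEmbedding fun x : X => fun n => inner ℝ x (d n) := by
    refine Continuous.measurableEmbedding (by fun_prop) fun x y hxy => ext_inner_right ℝ ?_
    exact congrFun (hd.equalizer (by fun_prop) (by fun_prop) (funext (congrFun hxy)))
  exact hemb.measurable_comp_iff.1 (measurable_pi_iff.2 fun n => hf (d n))

theorem Measurable.adjoint_apply {H : Type*} [NormedAddCommGroup H] [InnerProductSpace ℝ H]
    [CompleteSpace H] [SecondCountableTopology H] [MeasurableSpace H] [BorelSpace H]
    {g : Ω → H} (hg : Measurable g) {L : Ω → X →L[ℝ] H} (hL : ∀ ξ, Measurable fun ω => L ω ξ) :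
    Measurable fun ω => (L ω).adjoint (g ω) :=
  measurable_of_forall_measurable_inner_s9 fun c => by
    simpa only [ContinuousLinearMap.adjoint_inner_left] using hg.inner (hL c)

end Measurability

section CauchySchwarz

variable {α : Type*} [MeasurableSpace α] {μ : Measure α}
  {E : Type*} [NormedAddCommGroup E] [NormedSpace ℝ E]

theorem sq_norm_integral_le_of_norm_le_mul {h : α → E} {f g : α → ℝ} (hh : Integrable h μ)
    (hf : Integrable (fun a => f a ^ 2) μ) (hg : Integrable (fun a => g a ^ 2) μ)
    (hfg : ∀ a, ‖h a‖ ≤ f a * g a) :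
    ‖∫ a, h a ∂μ‖ ^ 2 ≤ (∫ a, f a ^ 2 ∂μ) * ∫ a, g a ^ 2 ∂μ := by
  set N := ‖∫ a, h a ∂μ‖
  set F := ∫ a, f a ^ 2 ∂μ
  set G := ∫ a, g a ^ 2 ∂μ
  have hF : 0 ≤ F := integral_nonneg fun a => sq_nonneg _
  have hG : 0 ≤ G := integral_nonneg fun a => sq_nonneg _
  -- AM-GM: `f g ≤ (t f² + g² / t) / 2` for every `t > 0`
  have hamgm : ∀ t : ℝ, 0 < t → 2 * N * t ≤ F * t ^ 2 + G := fun t ht => by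
    have hle : N ≤ ∫ a, (t * f a ^ 2 + g a ^ 2 / t) / 2 ∂μ := by
      refine (norm_integral_le_integral_norm _).trans (integral_mono hh.norm
        (((hf.const_mul t).add (hg.div_const t)).div_const 2) fun a => (hfg a).trans ?_)
      rw [le_div_iff₀ two_pos, ← sub_nonneg]
      have : t * f a ^ 2 + g a ^ 2 / t - f a * g a * 2 = (t * f a - g a) ^ 2 / t := by
        field_simp; ring
      rw [this]; positivity
    rw [integral_div, integral_add (hf.const_mul t) (hg.div_const t), integral_const_mul,
      integral_div] at hle
    have : G / t * t = G := div_mul_cancel₀ G ht.ne'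
    nlinarith
  have hquad : ∀ t : ℝ, 0 ≤ F * (t * t) + (-2 * N) * t + G := fun t => by
    rcases le_or_gt t 0 with ht | ht
    · have : 0 ≤ N := norm_nonneg _
      nlinarith [mul_nonneg hF (mul_self_nonneg t)]
    · nlinarith [hamgm t ht]
  have := discrim_le_zero hquad
  rw [discrim] at this
  nlinarith

end CauchySchwarz

theorem ContinuousLinearMap.norm_adjoint_apply_le_s9 {X H : Type*} [NormedAddCommGroup X]
    [InnerProductSpace ℝ X] [CompleteSpace X] [NormedAddCommGroup H] [InnerProductSpace ℝ H]
    [CompleteSpace H] (L : X →L[ℝ] H) (y : H) : ‖L.adjoint y‖ ≤ ‖L‖ * ‖y‖ := by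
  simpa only [LinearIsometryEquiv.norm_map] using L.adjoint.le_opNorm y

section IntegralAdjointComp

variable {Ω : Type*} [MeasurableSpace Ω] {μ : Measure Ω}
  {X : Type*} [NormedAddCommGroup X] [InnerProductSpace ℝ X] [CompleteSpace X]
  {H : Type*} [NormedAddCommGroup H] [InnerProductSpace ℝ H] [CompleteSpace H]
  {L : Ω → X →L[ℝ] H} {T : Ω → H → H}

theorem isCocoercive_integral_adjoint_comp {β : ℝ} (hβ : 0 < β) (hT : ∀ ω, IsCocoercive β (T ω))
    (hTmeas : ∀ ζ, AEStronglyMeasurable (fun ω => T ω (L ω ζ)) μ)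
    (hint : ∀ ζ, Integrable (fun ω => (L ω).adjoint (T ω (L ω ζ))) μ)
    (hL : Integrable (fun ω => ‖L ω‖ ^ 2) μ) :
    IsCocoercive (β / ∫ ω, ‖L ω‖ ^ 2 ∂μ) fun ζ => ∫ ω, (L ω).adjoint (T ω (L ω ζ)) ∂μ := by
  intro p q
  set D := fun ω => T ω (L ω p) - T ω (L ω q)
  set s := ∫ ω, ‖L ω‖ ^ 2 ∂μ
  set I := ∫ ω, ‖D ω‖ ^ 2 ∂μ
  have hGD : Integrable (fun ω => (L ω).adjoint (D ω)) μ := by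
    simp only [D, map_sub]
    exact (hint p).sub (hint q)
  have hsub : (∫ ω, (L ω).adjoint (T ω (L ω p)) ∂μ) - ∫ ω, (L ω).adjoint (T ω (L ω q)) ∂μ
      = ∫ ω, (L ω).adjoint (D ω) ∂μ := by
    rw [← integral_sub (hint p) (hint q)]
    simp only [D, map_sub]
  have hD : ∀ ω, ‖D ω‖ ≤ ‖L ω‖ * ‖p - q‖ / β := fun ω => by
    rw [le_div_iff₀' hβ]
    refine ((hT ω).mul_norm_sub_le _ _).trans ?_
    rw [← map_sub]
    exact (L ω).le_opNorm _
  have hD2 : Integrable (fun ω => ‖D ω‖ ^ 2) μ := by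
    refine (hL.mul_const ((‖p - q‖ / β) ^ 2)).mono'
      (((hTmeas p).sub (hTmeas q)).norm.pow 2) (Filter.Eventually.of_forall fun ω => ?_)
    rw [Real.norm_of_nonneg (sq_nonneg _), ← mul_pow, ← mul_div_assoc]
    exact pow_le_pow_left₀ (norm_nonneg _) (hD ω) 2
  have hinner : β * I ≤ inner ℝ (p - q) (∫ ω, (L ω).adjoint (D ω) ∂μ) := by
    rw [← integral_inner hGD, ← integral_const_mul]
    refine integral_mono (hD2.const_mul β) (hGD.const_inner (p - q)) fun ω => ?_
    rw [ContinuousLinearMap.adjoint_inner_right, map_sub]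
    exact hT ω (L ω p) (L ω q)
  have hnorm : ‖∫ ω, (L ω).adjoint (D ω) ∂μ‖ ^ 2 ≤ s * I :=
    sq_norm_integral_le_of_norm_le_mul hGD hL hD2 fun ω => (L ω).norm_adjoint_apply_le_s9 _
  rw [hsub]
  calc β / s * ‖∫ ω, (L ω).adjoint (D ω) ∂μ‖ ^ 2 ≤ β / s * (s * I) := by gcongr
    _ ≤ β * I := by
      obtain hs | hs := (show 0 ≤ s from integral_nonneg fun ω => sq_nonneg _).eq_or_lt
      · rw [← hs, div_zero, zero_mul]
        exact mul_nonneg hβ.le (integral_nonneg fun ω => sq_nonneg _)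
      · rw [div_mul_eq_mul_div, mul_left_comm, mul_div_cancel_left₀ _ hs.ne']
    _ ≤ _ := hinner

end IntegralAdjointComp

section Integrability

variable {Ω : Type*} [MeasurableSpace Ω] {μ : Measure Ω}

theorem memLp_two_of_lintegral_nnnorm_sq_lt_top {E : Type*} [NormedAddCommGroup E]
    [SecondCountableTopology E] [MeasurableSpace E] [BorelSpace E] {f : Ω → E} (hf : Measurable f)
    (hfin : ∫⁻ ω, (‖f ω‖₊ : ℝ≥0∞) ^ 2 ∂μ < ⊤) : MemLp f 2 μ :=
  ⟨hf.aestronglyMeasurable, (eLpNorm_lt_top_iff_lintegral_rpow_enorm_lt_top two_ne_zero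
    ENNReal.ofNat_ne_top).2 (by simpa [enorm_eq_nnnorm] using hfin)⟩

theorem integrable_adjoint_comp
    {H : Type*} [NormedAddCommGroup H] [InnerProductSpace ℝ H] [CompleteSpace H]
    [SecondCountableTopology H] [MeasurableSpace H] [BorelSpace H]
    {X : Type*} [NormedAddCommGroup X] [InnerProductSpace ℝ X] [CompleteSpace X]
    [SecondCountableTopology X] [MeasurableSpace X] [BorelSpace X]
    {L : Ω → X →L[ℝ] H} {T : Ω → H → H}
    (hL : Integrable (fun ω => ‖L ω‖ ^ 2) μ) (hLmeas : ∀ ξ, Measurable fun ω => L ω ξ)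
    (hT : ∀ ω, LipschitzWith 1 (T ω)) (hTmeas : ∀ ζ, Measurable fun ω => T ω (L ω ζ))
    {y z : Ω → H} (hy : MemLp y 2 μ) (hz : MemLp z 2 μ) (hyz : ∀ᵐ ω ∂μ, T ω (y ω) = z ω)
    (ζ : X) : Integrable (fun ω => (L ω).adjoint (T ω (L ω ζ))) μ := by
  have hy2 := (memLp_two_iff_integrable_sq_norm hy.1).1 hy
  have hz2 := (memLp_two_iff_integrable_sq_norm hz.1).1 hz
  refine ((hL.mul_const (‖ζ‖ + 1 / 2)).add (hy2.add hz2)).mono'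
    (((hTmeas ζ).adjoint_apply hLmeas).aestronglyMeasurable) ?_
  filter_upwards [hyz] with ω hω
  have hTL : ‖T ω (L ω ζ)‖ ≤ ‖L ω‖ * ‖ζ‖ + ‖y ω‖ + ‖z ω‖ := by
    have hlip := (hT ω).norm_sub_le (L ω ζ) (y ω)
    rw [hω, NNReal.coe_one, one_mul] at hlip
    linarith [norm_le_norm_add_norm_sub' (T ω (L ω ζ)) (z ω), norm_sub_le (L ω ζ) (y ω),
      (L ω).le_opNorm ζ]
  calc ‖(L ω).adjoint (T ω (L ω ζ))‖ ≤ ‖L ω‖ * (‖L ω‖ * ‖ζ‖ + ‖y ω‖ + ‖z ω‖) :=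
        ((L ω).norm_adjoint_apply_le_s9 _).trans (by gcongr)
    _ ≤ ‖L ω‖ ^ 2 * (‖ζ‖ + 1 / 2) + (‖y ω‖ ^ 2 + ‖z ω‖ ^ 2) := by
        nlinarith [sq_nonneg (‖L ω‖ - ‖y ω‖ - ‖z ω‖), sq_nonneg (‖y ω‖ - ‖z ω‖)]

end Integrability

theorem stmt_9_general
    {Ω : Type*} [MeasurableSpace Ω] {μ : Measure Ω}
    {X : Type*} [NormedAddCommGroup X] [InnerProductSpace ℝ X] [CompleteSpace X]
    [SecondCountableTopology X] [MeasurableSpace X] [BorelSpace X]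
    {H : Type*} [NormedAddCommGroup H] [InnerProductSpace ℝ H] [CompleteSpace H]
    [SecondCountableTopology H] [MeasurableSpace H] [BorelSpace H]
    -- the family of maximally monotone operators, with its resolvents `JA ω = J_{A_ω}`
    -- and the resolvents `JAinv ω = J_{A_ω⁻¹}` of the inverses
    (A : Ω → H → Set H) (JA JAinv : Ω → H → H)
    (hJA : ∀ ω, IsResolventOf (A ω) (JA ω))
    (hJAinv : ∀ ω, IsResolventOf (graphInv (A ω)) (JAinv ω))
    (hJAmeas : ∀ x : Ω → H, Measurable x → Measurable fun ω => JA ω (x ω))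
    (hdom : ∃ x xs : Ω → H, Measurable x ∧ Measurable xs ∧
      (∫⁻ ω, (‖x ω‖₊ : ℝ≥0∞) ^ 2 ∂μ) < ⊤ ∧ (∫⁻ ω, (‖xs ω‖₊ : ℝ≥0∞) ^ 2 ∂μ) < ⊤ ∧
      ∀ᵐ ω ∂μ, xs ω ∈ A ω (x ω))
    -- the family of bounded linear operators
    (L : Ω → X →L[ℝ] H)
    (hLmeas : ∀ ξ : X, Measurable fun ω => L ω ξ)
    (hLint : Integrable (fun ω => ‖L ω‖ ^ 2) μ)
    (τ : ℝ) (hτ : 0 < τ) (a : Ω → H → H)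
    (hsingle : ∀ ω (x : H), A ω x = {a ω x})
    (hcoco : ∀ ω (x y : H),
      τ * ‖a ω x - a ω y‖ ^ 2 ≤ inner ℝ (x - y) (a ω x - a ω y)) :
    ∀ (ξ η u v : X),
      u ∈ graphInv (rmiOp fun ζ : X => ∫ ω, (L ω).adjoint (JAinv ω (L ω ζ)) ∂μ) ξ →
      v ∈ graphInv (rmiOp fun ζ : X => ∫ ω, (L ω).adjoint (JAinv ω (L ω ζ)) ∂μ) η →
      ((τ + 1) / (∫ ω, ‖L ω‖ ^ 2 ∂μ) - 1) * ‖u - v‖ ^ 2 ≤ inner ℝ (ξ - η) (u - v) := by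
  intro ξ η u v hu hv
  obtain ⟨x, xs, hx, hxs, hx2, hxs2, hxxs⟩ := hdom
  have hT : ∀ ω, IsCocoercive (τ + 1) (JAinv ω) := fun ω =>
    IsCocoercive.resolvent_graphInv (hcoco ω) (hsingle ω) (hJAinv ω)
  have hTmeas : ∀ ζ, Measurable fun ω => JAinv ω (L ω ζ) := fun ζ => by
    simp only [fun ω => (hJA ω).graphInv_apply (hJAinv ω)]
    exact (hLmeas ζ).sub (hJAmeas _ (hLmeas ζ))
  have hint := integrable_adjoint_comp hLint hLmeas
    (fun ω => (hT ω).lipschitzWith_one (by linarith)) hTmeas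
    ((memLp_two_of_lintegral_nnnorm_sq_lt_top hx hx2).add
      (memLp_two_of_lintegral_nnnorm_sq_lt_top hxs hxs2))
    (memLp_two_of_lintegral_nnnorm_sq_lt_top hxs hxs2)
    (hxxs.mono fun ω => (hJAinv ω).graphInv_apply_add)
  exact (isCocoercive_integral_adjoint_comp (by linarith) hT
    (fun ζ => (hTmeas ζ).aestronglyMeasurable) hint hLint).graphInv_rmiOp hu hv

/-- Theorem 3.5(xii): if `τ > 0` and every `A_ω` is single-valued with full
domain and `τ`-cocoercive, then the integral resolvent comixture `C = rcm(L_ω, A_ω)` is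
`δ`-cocoercive with `δ = (τ + 1)/∫ ‖L_ω‖² dμ − 1`. -/
theorem stmt_9
    {Ω : Type*} [MeasurableSpace Ω] {μ : Measure Ω} [SigmaFinite μ] [μ.IsComplete]
    {X : Type*} [NormedAddCommGroup X] [InnerProductSpace ℝ X] [CompleteSpace X]
    [SecondCountableTopology X] [MeasurableSpace X] [BorelSpace X]
    {H : Type*} [NormedAddCommGroup H] [InnerProductSpace ℝ H] [CompleteSpace H]
    [SecondCountableTopology H] [MeasurableSpace H] [BorelSpace H]
    -- the family of maximally monotone operators, with its resolvents `JA ω = J_{A_ω}`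
    -- and the resolvents `JAinv ω = J_{A_ω⁻¹}` of the inverses
    (A : Ω → H → Set H) (JA JAinv : Ω → H → H)
    (hAmax : ∀ ω, IsMaxMonotone (A ω))
    (hJA : ∀ ω, IsResolventOf (A ω) (JA ω))
    (hJAinv : ∀ ω, IsResolventOf (graphInv (A ω)) (JAinv ω))
    (hJAmeas : ∀ x : Ω → H, Measurable x → Measurable fun ω => JA ω (x ω))
    (hdom : ∃ x xs : Ω → H, Measurable x ∧ Measurable xs ∧
      (∫⁻ ω, (‖x ω‖₊ : ℝ≥0∞) ^ 2 ∂μ) < ⊤ ∧ (∫⁻ ω, (‖xs ω‖₊ : ℝ≥0∞) ^ 2 ∂μ) < ⊤ ∧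
      ∀ᵐ ω ∂μ, xs ω ∈ A ω (x ω))
    -- the family of bounded linear operators
    (L : Ω → X →L[ℝ] H)
    (hLmeas : ∀ ξ : X, Measurable fun ω => L ω ξ)
    (hLint : Integrable (fun ω => ‖L ω‖ ^ 2) μ)
    (hL0 : 0 < ∫ ω, ‖L ω‖ ^ 2 ∂μ) (hL1 : (∫ ω, ‖L ω‖ ^ 2 ∂μ) ≤ 1)
    (τ : ℝ) (hτ : 0 < τ) (a : Ω → H → H)
    (hsingle : ∀ ω (x : H), A ω x = {a ω x})
    (hcoco : ∀ ω (x y : H),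
      τ * ‖a ω x - a ω y‖ ^ 2 ≤ inner ℝ (x - y) (a ω x - a ω y)) :
    ∀ (ξ η u v : X),
      u ∈ graphInv (rmiOp fun ζ : X => ∫ ω, (L ω).adjoint (JAinv ω (L ω ζ)) ∂μ) ξ →
      v ∈ graphInv (rmiOp fun ζ : X => ∫ ω, (L ω).adjoint (JAinv ω (L ω ζ)) ∂μ) η →
      ((τ + 1) / (∫ ω, ‖L ω‖ ^ 2 ∂μ) - 1) * ‖u - v‖ ^ 2 ≤ inner ℝ (ξ - η) (u - v) :=
  stmt_9_general A JA JAinv hJA hJAinv hJAmeas hdom L hLmeas hLint τ hτ a hsingle hcoco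
end

section
/- Let (Ω, 𝓕, P) be a complete probability space, let H be a separable real Hilbert space, and let (A_ω)_{ω∈Ω} be a family of maximally monotone operators from H to 2^H such that for every 𝗑 ∈ H the map ω ↦ J_{A_ω} 𝗑 is measurable and ∫_Ω ‖J_{A_ω} 0‖² P(dω) < +∞. Then: (i) PE(A_ω)_{ω∈Ω} is maximally monotone; (ii) (PE(A_ω)_{ω∈Ω})⁻¹ = PE(A_ω⁻¹)_{ω∈Ω}; (iii) the resolvent of PE(A_ω)_{ω∈Ω} is 𝗑 ↦ ∫_Ω J_{A_ω} 𝗑 P(dω); (iv) the index-1 Yosida approximation satisfies (PE(A_ω)_{ω∈Ω}) □ Id_H = 𝗑 ↦ ∫_Ω (A_ω □ Id_H)(𝗑) P(dω), where A □ Id = Id − J_A; and (v) if τ > 0 and every A_ω is single-valued with dom A_ω = H and τ-cocoercive, then PE(A_ω)_{ω∈Ω} is τ-cocoercive. -/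
/-!
Write `R x = ∫ J_{A_ω} x dP`, so that `PE(A_ω) = R⁻¹ − Id`. For an everywhere defined `R`, the
operator `R⁻¹ − Id` has resolvent `R`, its inverse is `(Id − R)⁻¹ − Id`, and it is maximally
monotone as soon as it is monotone (Minty's easy direction: `Id + (R⁻¹ − Id)` is onto).
Since `J_A⁻¹ − Id = A`, the operator `A` is `τ`-cocoercive (`τ = 0`: monotone) iff for all `p, q`,
with `d = p − q` and `e = J_A p − J_A q`, we have `τ‖d − e‖² ≤ ⟪e, d − e⟫`. For fixed `d` this is
a concave constraint on `e`, so by Jensen's inequality it survives taking the expectation over `ω`;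
this gives monotonicity in (i) and cocoercivity in (v). Items (ii) and (iv) follow from
`J_{A⁻¹} = Id − J_A` and linearity of the integral.
-/

open MeasureTheory
open scoped ENNReal NNReal

section Resolvent

variable {X : Type*} [AddCommGroup X]

lemma IsResolventOf.rmiOp_eq {A : X → Set X} {J : X → X} (hJ : IsResolventOf A J) :
    rmiOp J = A := by
  ext x u
  simpa [rmiOp] using hJ (x + u) x

lemma IsResolventOf.apply_graphInv {A : X → Set X} {J J' : X → X} (hJ : IsResolventOf A J)
    (hJ' : IsResolventOf (graphInv A) J') (z : X) : J' z = z - J z :=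
  (hJ' z _).2 <| by simpa [graphInv] using (hJ z (J z)).1 rfl

lemma isResolventOf_rmiOp (R : X → X) : IsResolventOf (rmiOp R) R := by
  intro x y
  simp [rmiOp]

lemma graphInv_rmiOp (R : X → X) : graphInv (rmiOp R) = rmiOp fun z => z - R z := by
  ext u x
  simp only [graphInv, rmiOp, Set.mem_ofPred_eq, add_comm u x]
  constructor
  · intro h
    rw [h, add_sub_cancel_left]
  · intro h
    rw [sub_eq_iff_eq_add'] at h
    exact add_right_cancel h.symm

end Resolvent

section Cocoercive

variable {H : Type*} [NormedAddCommGroup H] [InnerProductSpace ℝ H]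

def IsCocoerciveOp (τ : ℝ) (A : H → Set H) : Prop :=
  ∀ ⦃x u y v : H⦄, u ∈ A x → v ∈ A y → τ * ‖u - v‖ ^ 2 ≤ inner ℝ (x - y) (u - v)

lemma IsMonotoneOp.isCocoerciveOp_zero {A : H → Set H} (hA : IsMonotoneOp A) :
    IsCocoerciveOp 0 A :=
  fun _ _ _ _ hu hv => by simpa using hA hu hv

lemma IsCocoerciveOp.isMonotoneOp {τ : ℝ} {A : H → Set H} (hτ : 0 ≤ τ)
    (hA : IsCocoerciveOp τ A) : IsMonotoneOp A :=
  fun _ _ _ _ hu hv => (by positivity : 0 ≤ τ * _).trans (hA hu hv)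

lemma isCocoerciveOp_of_eq_singleton {τ : ℝ} {A : H → Set H} {a : H → H}
    (hA : ∀ x, A x = {a x}) (ha : ∀ x y, τ * ‖a x - a y‖ ^ 2 ≤ inner ℝ (x - y) (a x - a y)) :
    IsCocoerciveOp τ A := by
  intro x u y v hu hv
  rw [hA, Set.mem_singleton_iff] at hu hv
  subst hu hv
  exact ha x y

lemma isCocoerciveOp_rmiOp_iff {τ : ℝ} {R : H → H} :
    IsCocoerciveOp τ (rmiOp R) ↔
      ∀ p q, τ * ‖(p - q) - (R p - R q)‖ ^ 2 ≤ inner ℝ (R p - R q) ((p - q) - (R p - R q)) := by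
  constructor
  · intro hR p q
    have hmem : ∀ z, z - R z ∈ rmiOp R (R z) := fun z => by simp [rmiOp]
    have hdiff : (p - q) - (R p - R q) = (p - R p) - (q - R q) := by abel
    rw [hdiff]
    exact hR (hmem p) (hmem q)
  · intro hR x u y v hu hv
    have hdiff : (x + u - (y + v)) - (x - y) = u - v := by abel
    have h := hR (x + u) (y + v)
    rwa [hu, hv, hdiff] at h

lemma isMaxMonotone_rmiOp {R : H → H} (hR : IsMonotoneOp (rmiOp R)) :
    IsMaxMonotone (rmiOp R) := by
  refine ⟨hR, fun B hB hsub x v hv => ?_⟩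
  set y := R (x + v)
  have hy : x + v - y ∈ B y := hsub y (by simp [rmiOp, y])
  have hmon := hB hv hy
  have hdiff : v - (x + v - y) = -(x - y) := by abel
  rw [hdiff, inner_neg_right, real_inner_self_eq_norm_sq, neg_nonneg] at hmon
  have hxy : x - y = 0 := by simpa using hmon
  exact (sub_eq_zero.1 hxy).symm

lemma lipschitzWith_one_of_isMonotoneOp_rmiOp {R : H → H} (hR : IsMonotoneOp (rmiOp R)) :
    LipschitzWith 1 R := by
  refine LipschitzWith.of_dist_le_mul fun p q => ?_
  have hfirm := isCocoerciveOp_rmiOp_iff.1 hR.isCocoerciveOp_zero p q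
  rw [zero_mul, inner_sub_right, real_inner_self_eq_norm_sq, sub_nonneg] at hfirm
  have hcs := real_inner_le_norm (R p - R q) (p - q)
  rw [NNReal.coe_one, one_mul, dist_eq_norm, dist_eq_norm]
  nlinarith [norm_nonneg (R p - R q), norm_nonneg (p - q)]

lemma concaveOn_inner_sub_mul_norm_sq {τ : ℝ} (hτ : 0 ≤ τ) (d : H) :
    ConcaveOn ℝ Set.univ fun e : H => inner ℝ e (d - e) - τ * ‖d - e‖ ^ 2 := by
  have hsq : ConvexOn ℝ Set.univ fun e : H => ‖e‖ ^ 2 :=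
    convexOn_univ_norm.pow (fun _ _ => norm_nonneg _) 2
  have hdist : ConvexOn ℝ Set.univ fun e : H => ‖d - e‖ ^ 2 := by
    have := (convexOn_dist d convex_univ).pow (fun _ _ => dist_nonneg) 2
    simp only [dist_eq_norm, norm_sub_rev] at this
    exact this
  have hlin : ConcaveOn ℝ Set.univ fun e : H => inner ℝ d e :=
    (innerSL ℝ d).toLinearMap.concaveOn convex_univ
  refine ((hlin.add hsq.neg).add (hdist.smul hτ).neg).congr fun e _ => ?_
  simp [inner_sub_right, real_inner_comm]
  ring

lemma norm_inner_sub_mul_norm_sq_le {τ : ℝ} (hτ : 0 ≤ τ) {d e : H} (he : ‖e‖ ≤ ‖d‖) :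
    ‖inner ℝ e (d - e) - τ * ‖d - e‖ ^ 2‖ ≤ (2 + 4 * τ) * ‖d‖ ^ 2 := by
  have hde : ‖d - e‖ ≤ 2 * ‖d‖ := (norm_sub_le _ _).trans (by linarith)
  have hinner : |inner ℝ e (d - e)| ≤ ‖d‖ * (2 * ‖d‖) :=
    (abs_real_inner_le_norm _ _).trans (mul_le_mul he hde (norm_nonneg _) (norm_nonneg _))
  have hsq : ‖d - e‖ ^ 2 ≤ (2 * ‖d‖) ^ 2 := pow_le_pow_left₀ (norm_nonneg _) hde 2
  rw [Real.norm_eq_abs]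
  refine (abs_sub _ _).trans ?_
  rw [abs_of_nonneg (by positivity : 0 ≤ τ * ‖d - e‖ ^ 2)]
  nlinarith [mul_le_mul_of_nonneg_left hsq hτ]

end Cocoercive

section Expectation

variable {Ω : Type*} [MeasurableSpace Ω] {P : Measure Ω}
  {H : Type*} [NormedAddCommGroup H]

lemma integrable_of_lintegral_nnnorm_sq_lt_top [IsFiniteMeasure P] {f : Ω → H}
    (hf : AEStronglyMeasurable f P) (h : ∫⁻ ω, (‖f ω‖₊ : ℝ≥0∞) ^ 2 ∂P < ⊤) : Integrable f P := by
  refine MemLp.integrable (q := 2) one_le_two ⟨hf, ?_⟩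
  rw [eLpNorm_lt_top_iff_lintegral_rpow_enorm_lt_top two_ne_zero ENNReal.ofNat_ne_top]
  simpa [enorm_eq_nnnorm] using h

lemma integrable_apply_of_lipschitzWith [IsFiniteMeasure P] {J : Ω → H → H} {K : ℝ≥0}
    (hJ : ∀ ω, LipschitzWith K (J ω)) (hmeas : ∀ x, AEStronglyMeasurable (fun ω => J ω x) P)
    {x₀ : H} (hx₀ : Integrable (fun ω => J ω x₀) P) (x : H) :
    Integrable (fun ω => J ω x) P := by
  refine Integrable.mono' (hx₀.norm.add (integrable_const (K * ‖x - x₀‖))) (hmeas x)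
    (Filter.Eventually.of_forall fun ω => ?_)
  calc ‖J ω x‖ ≤ ‖J ω x₀‖ + ‖J ω x - J ω x₀‖ := norm_le_insert' _ _
    _ ≤ ‖J ω x₀‖ + K * ‖x - x₀‖ := by gcongr; exact (hJ ω).norm_sub_le x x₀

variable [InnerProductSpace ℝ H] [CompleteSpace H] [IsProbabilityMeasure P]

theorem isCocoerciveOp_rmiOp_integral {τ : ℝ} (hτ : 0 ≤ τ) {J : Ω → H → H}
    (hJ : ∀ ω, IsCocoerciveOp τ (rmiOp (J ω))) (hint : ∀ x, Integrable (fun ω => J ω x) P) :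
    IsCocoerciveOp τ (rmiOp fun x => ∫ ω, J ω x ∂P) := by
  rw [isCocoerciveOp_rmiOp_iff]
  intro p q
  set g : H → ℝ := fun e => inner ℝ e ((p - q) - e) - τ * ‖(p - q) - e‖ ^ 2
  have hg_cont : Continuous g := by fun_prop
  have hf : Integrable (fun ω => J ω p - J ω q) P := (hint p).sub (hint q)
  have hgf : Integrable (fun ω => g (J ω p - J ω q)) P := by
    refine Integrable.of_bound (hg_cont.comp_aestronglyMeasurable hf.1) _
      (Filter.Eventually.of_forall fun ω => norm_inner_sub_mul_norm_sq_le hτ ?_)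
    have := (lipschitzWith_one_of_isMonotoneOp_rmiOp ((hJ ω).isMonotoneOp hτ)).norm_sub_le p q
    rwa [NNReal.coe_one, one_mul] at this
  have hgap : 0 ≤ ∫ ω, g (J ω p - J ω q) ∂P :=
    integral_nonneg fun ω => sub_nonneg.2 (isCocoerciveOp_rmiOp_iff.1 (hJ ω) p q)
  have hjensen := (concaveOn_inner_sub_mul_norm_sq hτ (p - q)).le_map_integral
    hg_cont.continuousOn isClosed_univ (Filter.Eventually.of_forall fun _ => Set.mem_univ _)
    hf hgf
  rw [integral_sub (hint p) (hint q)] at hjensen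
  exact sub_nonneg.1 (hgap.trans hjensen)

end Expectation

theorem stmt_11_general
    {Ω : Type*} [MeasurableSpace Ω] {P : Measure Ω} [IsProbabilityMeasure P]
    {H : Type*} [NormedAddCommGroup H] [InnerProductSpace ℝ H] [CompleteSpace H]
    [SecondCountableTopology H] [MeasurableSpace H] [BorelSpace H]
    (A : Ω → H → Set H) (JA JAinv : Ω → H → H)
    (hAmax : ∀ ω, IsMaxMonotone (A ω))
    (hJA : ∀ ω, IsResolventOf (A ω) (JA ω))
    (hJAinv : ∀ ω, IsResolventOf (graphInv (A ω)) (JAinv ω))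
    (hJAmeas : ∀ x : H, Measurable fun ω => JA ω x)
    (hJA0 : (∫⁻ ω, (‖JA ω 0‖₊ : ℝ≥0∞) ^ 2 ∂P) < ⊤) :
    IsMaxMonotone (rmiOp fun x : H => ∫ ω, JA ω x ∂P) ∧
    graphInv (rmiOp fun x : H => ∫ ω, JA ω x ∂P)
      = rmiOp (fun x : H => ∫ ω, JAinv ω x ∂P) ∧
    IsResolventOf (rmiOp fun x : H => ∫ ω, JA ω x ∂P) (fun x : H => ∫ ω, JA ω x ∂P) ∧
    (∀ x : H, x - (∫ ω, JA ω x ∂P) = ∫ ω, (x - JA ω x) ∂P) ∧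
    (∀ τ : ℝ, 0 < τ → ∀ a : Ω → H → H, (∀ ω (x : H), A ω x = {a ω x}) →
      (∀ ω (x y : H), τ * ‖a ω x - a ω y‖ ^ 2 ≤ inner ℝ (x - y) (a ω x - a ω y)) →
      ∀ x y u v : H, u ∈ (rmiOp fun z : H => ∫ ω, JA ω z ∂P) x →
        v ∈ (rmiOp fun z : H => ∫ ω, JA ω z ∂P) y →
        τ * ‖u - v‖ ^ 2 ≤ inner ℝ (x - y) (u - v)) := by
  have hmono : ∀ ω, IsCocoerciveOp 0 (rmiOp (JA ω)) := fun ω => by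
    rw [(hJA ω).rmiOp_eq]
    exact (hAmax ω).1.isCocoerciveOp_zero
  have hint : ∀ x, Integrable (fun ω => JA ω x) P :=
    integrable_apply_of_lipschitzWith
      (fun ω => lipschitzWith_one_of_isMonotoneOp_rmiOp ((hmono ω).isMonotoneOp le_rfl))
      (fun x => (hJAmeas x).aestronglyMeasurable)
      (integrable_of_lintegral_nnnorm_sq_lt_top (hJAmeas 0).aestronglyMeasurable hJA0)
  have hyosida : ∀ x, x - ∫ ω, JA ω x ∂P = ∫ ω, (x - JA ω x) ∂P := fun x => by
    rw [integral_sub (integrable_const x) (hint x), integral_const, probReal_univ, one_smul]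
  have hPE : IsMonotoneOp (rmiOp fun x => ∫ ω, JA ω x ∂P) :=
    (isCocoerciveOp_rmiOp_integral le_rfl hmono hint).isMonotoneOp le_rfl
  refine ⟨isMaxMonotone_rmiOp hPE, ?_, isResolventOf_rmiOp _, hyosida, ?_⟩
  · simp_rw [graphInv_rmiOp, hyosida, (hJA _).apply_graphInv (hJAinv _)]
  · intro τ hτ a hA ha x y u v hu hv
    refine isCocoerciveOp_rmiOp_integral hτ.le (fun ω => ?_) hint hu hv
    rw [(hJA ω).rmiOp_eq]
    exact isCocoerciveOp_of_eq_singleton (hA ω) (ha ω)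

/-- Corollary 3.10: properties of the resolvent expectation
`PE(A_ω) = (x ↦ ∫ J_{A_ω} x dP)⁻¹ − Id`: (i) it is maximally monotone; (ii) its inverse is
the resolvent expectation of the inverses; (iii) its resolvent is `x ↦ ∫ J_{A_ω} x dP`;
(iv) its index-1 Yosida approximation is `x ↦ ∫ (x − J_{A_ω} x) dP`; (v) if `τ > 0` and
every `A_ω` is single-valued with full domain and `τ`-cocoercive, then `PE(A_ω)` is
`τ`-cocoercive. -/
theorem stmt_11
    {Ω : Type*} [MeasurableSpace Ω] {P : Measure Ω} [IsProbabilityMeasure P] [P.IsComplete]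
    {H : Type*} [NormedAddCommGroup H] [InnerProductSpace ℝ H] [CompleteSpace H]
    [SecondCountableTopology H] [MeasurableSpace H] [BorelSpace H]
    (A : Ω → H → Set H) (JA JAinv : Ω → H → H)
    (hAmax : ∀ ω, IsMaxMonotone (A ω))
    (hJA : ∀ ω, IsResolventOf (A ω) (JA ω))
    (hJAinv : ∀ ω, IsResolventOf (graphInv (A ω)) (JAinv ω))
    (hJAmeas : ∀ x : H, Measurable fun ω => JA ω x)
    (hJA0 : (∫⁻ ω, (‖JA ω 0‖₊ : ℝ≥0∞) ^ 2 ∂P) < ⊤) :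
    IsMaxMonotone (rmiOp fun x : H => ∫ ω, JA ω x ∂P) ∧
    graphInv (rmiOp fun x : H => ∫ ω, JA ω x ∂P)
      = rmiOp (fun x : H => ∫ ω, JAinv ω x ∂P) ∧
    IsResolventOf (rmiOp fun x : H => ∫ ω, JA ω x ∂P) (fun x : H => ∫ ω, JA ω x ∂P) ∧
    (∀ x : H, x - (∫ ω, JA ω x ∂P) = ∫ ω, (x - JA ω x) ∂P) ∧
    (∀ τ : ℝ, 0 < τ → ∀ a : Ω → H → H, (∀ ω (x : H), A ω x = {a ω x}) →
      (∀ ω (x y : H), τ * ‖a ω x - a ω y‖ ^ 2 ≤ inner ℝ (x - y) (a ω x - a ω y)) →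
      ∀ x y u v : H, u ∈ (rmiOp fun z : H => ∫ ω, JA ω z ∂P) x →
        v ∈ (rmiOp fun z : H => ∫ ω, JA ω z ∂P) y →
        τ * ‖u - v‖ ^ 2 ≤ inner ℝ (x - y) (u - v)) :=
  stmt_11_general A JA JAinv hAmax hJA hJAinv hJAmeas hJA0
end
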